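/- arXiv:2312.00556 — 2 statements merged into one kernel-verified Lean document; each statement's English description precedes it below -/
import Mathlib

section
/- For real ω > 0, lim_{t → ∞} ∫_{−t}^{t} e^{i(p⁰ + ω) r} |r| dr = ∂_{p⁰} PV(2/(p⁰ + ω)) in the sense of tempered distributions in p⁰; in particular, when paired with a Schwartz function φ(p⁰), the pairing ∫_{−t}^{t} |r| (∫ φ(p⁰) e^{i(p⁰+ω)r} dp⁰) dr converges as t → ∞ to a finite limit. -/
/-!
Write `ψ q = φ' (q - ω)`. Integrating by parts in `p`,
`|r| ∫ φ p e^{i(p+ω)r} dp = ∫ φ' p · i sgn r · e^{i(p+ω)r} dp`, and after Fubini the `r`-integral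
`∫_{-t}^{t} i sgn r e^{iqr} dr = 2 (cos (q t) - 1) / q` leaves `∫ ψ q · 2 (cos (q t) - 1) / q dq`.
The principal value is `∫ ψ q · 2 · 1_{δ < |q|} / q dq` as well, so both sides pair `ψ q / q`
with an even weight. Against an even weight the odd term `ψ 0 / q` near `0` integrates to zero,
which replaces `ψ q / q` by the integrable `regularPart ψ`. Dominated convergence as `δ → 0` and
the Riemann–Lebesgue lemma as `t → ∞` then give the common limit `-2 ∫ regularPart ψ`.
-/

open MeasureTheory Filter Set Complex Topology
open scoped SchwartzMap

namespace Real

theorem sign_mul_self_eq_abs (r : ℝ) : sign r * r = |r| := by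
  rcases lt_trichotomy r 0 with hr | rfl | hr
  · rw [sign_of_neg hr, abs_of_neg hr, neg_one_mul]
  · simp
  · rw [sign_of_pos hr, abs_of_pos hr, one_mul]

@[fun_prop]
theorem measurable_sign : Measurable sign :=
  Measurable.ite measurableSet_Iio measurable_const
    (Measurable.ite measurableSet_Ioi measurable_const measurable_const)

end Real

theorem integral_eq_zero_of_odd {G E : Type*} [MeasurableSpace G] [AddGroup G] [MeasurableNeg G]
    [NormedAddCommGroup E] [NormedSpace ℝ E] (μ : Measure G) [μ.IsNegInvariant] {f : G → E}
    (hf : ∀ x, f (-x) = -f x) : ∫ x, f x ∂μ = 0 := by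
  have h := integral_neg_eq_self f μ
  rw [eq_comm, integral_congr_ae (ae_of_all _ hf), integral_neg, ← sub_eq_zero, sub_neg_eq_add,
    ← two_smul ℝ, smul_eq_zero] at h
  exact h.resolve_left two_ne_zero

theorem SchwartzMap.exists_lipschitzWith {F : Type*} [NormedAddCommGroup F] [NormedSpace ℝ F]
    (f : 𝓢(ℝ, F)) : ∃ K, LipschitzWith K f := by
  refine ⟨(SchwartzMap.seminorm ℝ 0 0 (derivCLM ℝ F f)).toNNReal,
    lipschitzWith_of_nnnorm_deriv_le f.differentiable fun x => ?_⟩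
  rw [← NNReal.coe_le_coe, coe_nnnorm, ← derivCLM_apply ℝ]
  exact (norm_le_seminorm ℝ _ x).trans (Real.le_coe_toNNReal _)

theorem SchwartzMap.exists_lipschitzWith_deriv {F : Type*} [NormedAddCommGroup F]
    [NormedSpace ℝ F] (f : 𝓢(ℝ, F)) : ∃ K, LipschitzWith K (deriv f) := by
  obtain ⟨K, hK⟩ := (derivCLM ℝ F f).exists_lipschitzWith
  exact ⟨K, funext (derivCLM_apply ℝ f) ▸ hK⟩

noncomputable def regularPart (ψ : ℝ → ℂ) (q : ℝ) : ℂ :=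
  (ψ q - (Icc (-1 : ℝ) 1).indicator (fun _ => ψ 0) q) / q

theorem norm_regularPart_le {ψ : ℝ → ℂ} {K : NNReal} (hψ : LipschitzWith K ψ) (q : ℝ) :
    ‖regularPart ψ q‖ ≤ ‖ψ q‖ + (Icc (-1 : ℝ) 1).indicator (fun _ => (K : ℝ)) q := by
  unfold regularPart
  rw [norm_div, norm_real]
  by_cases hq : q ∈ Icc (-1 : ℝ) 1
  · rw [indicator_of_mem hq, indicator_of_mem hq]
    refine (div_le_of_le_mul₀ (norm_nonneg _) K.2 ?_).trans (le_add_of_nonneg_left (norm_nonneg _))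
    simpa using hψ.norm_sub_le q 0
  · rw [indicator_of_notMem hq, indicator_of_notMem hq, sub_zero, add_zero]
    refine div_le_self (norm_nonneg _) ?_
    rw [Real.norm_eq_abs]
    contrapose! hq
    exact abs_le.mp hq.le

theorem LipschitzWith.integrable_regularPart {ψ : ℝ → ℂ} {K : NNReal} (hψ : LipschitzWith K ψ)
    (hψi : Integrable ψ) : Integrable (regularPart ψ) := by
  refine Integrable.mono' (hψi.norm.add ((integrable_indicator_iff measurableSet_Icc).2
    (integrableOn_const measure_Icc_lt_top.ne))) ?_ (ae_of_all _ (norm_regularPart_le hψ))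
  exact ((hψ.continuous.measurable.sub (measurable_const.indicator measurableSet_Icc)).div
    measurable_ofReal).aestronglyMeasurable

theorem integral_mul_div_eq_integral_regularPart_mul {ψ w : ℝ → ℂ} {C C' : ℝ}
    (hψ : Integrable (regularPart ψ)) (hw : Measurable w) (hw_even : ∀ q, w (-q) = w q)
    (hw_bdd : ∀ q, ‖w q‖ ≤ C) (hw_div : ∀ q, ‖w q / q‖ ≤ C') :
    ∫ q, ψ q * (w q / q) = ∫ q, regularPart ψ q * w q := by
  set s := (Icc (-1 : ℝ) 1).indicator fun q => ψ 0 * (w q / q) with hs_def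
  have hdecomp : ∀ q, ψ q * (w q / q) = regularPart ψ q * w q + s q := by
    intro q
    by_cases hq : q ∈ Icc (-1 : ℝ) 1 <;> simp only [s, regularPart, indicator_of_mem,
      indicator_of_notMem, hq, not_false_eq_true] <;> ring
  have hs_odd : ∀ q, s (-q) = -s q := by
    intro q
    have hsymm : -q ∈ Icc (-1 : ℝ) 1 ↔ q ∈ Icc (-1 : ℝ) 1 := by rw [← Set.mem_neg, neg_Icc, neg_neg]
    rw [hs_def]
    by_cases hq : q ∈ Icc (-1 : ℝ) 1
    · rw [indicator_of_mem hq, indicator_of_mem (hsymm.2 hq), hw_even, ofReal_neg, div_neg, mul_neg]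
    · rw [indicator_of_notMem hq, indicator_of_notMem (mt hsymm.1 hq), neg_zero]
  have hs : Integrable s := (integrable_indicator_iff measurableSet_Icc).2 <|
    Measure.integrableOn_of_bounded (M := ‖ψ 0‖ * C') measure_Icc_lt_top.ne
      ((hw.div measurable_ofReal).const_mul _).aestronglyMeasurable
      (ae_of_all _ fun q => (norm_mul_le _ _).trans
        (mul_le_mul_of_nonneg_left (hw_div q) (norm_nonneg _)))
  rw [integral_congr_ae (ae_of_all _ hdecomp),
    integral_add (hψ.mul_bdd hw.aestronglyMeasurable (ae_of_all _ hw_bdd)) hs,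
    integral_eq_zero_of_odd volume hs_odd, add_zero]

theorem tendsto_setIntegral_abs_gt {E : Type*} [NormedAddCommGroup E] [NormedSpace ℝ E]
    {h : ℝ → E} (hh : Integrable h) :
    Tendsto (fun δ : ℝ => ∫ q in {q | δ < |q|}, h q) (𝓝[>] 0) (𝓝 (∫ q, h q)) := by
  have hS : ∀ δ : ℝ, MeasurableSet {q : ℝ | δ < |q|} :=
    fun δ => measurableSet_lt measurable_const continuous_abs.measurable
  simp_rw [← integral_indicator (hS _)]
  refine tendsto_integral_filter_of_dominated_convergence (fun q => ‖h q‖)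
    (Eventually.of_forall fun δ => (hh.indicator (hS δ)).aestronglyMeasurable)
    (Eventually.of_forall fun δ => ae_of_all _ fun q => norm_indicator_le_norm_self _ _) hh.norm ?_
  filter_upwards [Measure.ae_ne volume 0] with q hq
  refine tendsto_const_nhds.congr' ?_
  filter_upwards [(eventually_lt_nhds (abs_pos.2 hq)).filter_mono nhdsWithin_le_nhds] with δ hδ
  exact (indicator_of_mem (s := {q : ℝ | δ < |q|}) hδ h).symm

theorem tendsto_integral_mul_cexp_cocompact (h : ℝ → ℂ) :
    Tendsto (fun t : ℝ => ∫ q, h q * exp (q * t * I)) (cocompact ℝ) (𝓝 0) := by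
  have hπ : -(2 * Real.pi)⁻¹ ≠ 0 := by simp [Real.pi_ne_zero]
  refine ((Real.tendsto_integral_exp_smul_cocompact h).comp
    (tendsto_cocompact_mul_left₀ hπ)).congr fun t => integral_congr_ae (ae_of_all _ fun q => ?_)
  rw [Circle.smul_def, Real.fourierChar_apply, smul_eq_mul, mul_comm]
  congr 2
  push_cast
  field_simp [Real.pi_ne_zero]

theorem tendsto_integral_mul_cos_cocompact {h : ℝ → ℂ} (hh : Integrable h) :
    Tendsto (fun t : ℝ => ∫ q, h q * cos (q * t)) (cocompact ℝ) (𝓝 0) := by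
  have hexp : ∀ s : ℝ, Integrable fun q : ℝ => h q * exp (q * s * I) := fun s =>
    hh.mul_bdd (by fun_prop) (ae_of_all _ fun q => by
      rw [← ofReal_mul, norm_exp_ofReal_mul_I])
  have hneg := (tendsto_integral_mul_cexp_cocompact h).comp
    (tendsto_cocompact_mul_left₀ (neg_ne_zero.2 one_ne_zero))
  have := ((tendsto_integral_mul_cexp_cocompact h).add hneg).div_const 2
  rw [zero_add, zero_div] at this
  refine this.congr fun t => ?_
  simp only [Function.comp_apply, ← integral_add (hexp _) (hexp _), ← integral_div]
  refine integral_congr_ae (ae_of_all _ fun q => ?_)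
  simp only [cos]
  push_cast
  ring_nf

theorem tendsto_integral_mul_two_mul_cos_sub_one {h : ℝ → ℂ} (hh : Integrable h) :
    Tendsto (fun t : ℝ => ∫ q, h q * (2 * (cos (q * t) - 1))) atTop
      (𝓝 (-(2 * ∫ q, h q))) := by
  have hcos : ∀ t : ℝ, Integrable fun q : ℝ => h q * cos (q * t) := fun t =>
    hh.mul_bdd (by fun_prop) (ae_of_all _ fun q => by
      rw [← ofReal_mul, ← ofReal_cos, norm_real]; exact Real.abs_cos_le_one _)
  have := ((tendsto_integral_mul_cos_cocompact hh).mono_left atTop_le_cocompact).const_mul 2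
  have := this.sub_const (2 * ∫ q, h q)
  rw [mul_zero, zero_sub] at this
  refine this.congr fun t => ?_
  rw [← integral_const_mul, ← integral_const_mul, ← integral_sub ((hcos t).const_mul 2)
    (hh.const_mul 2)]
  exact integral_congr_ae (ae_of_all _ fun q => by ring)

theorem ofReal_mul_integral_mul_cexp {f f' : ℝ → ℂ} (hf : ∀ x, HasDerivAt f (f' x) x)
    (hfi : Integrable f) (hf'i : Integrable f') (ω r : ℝ) :
    (r : ℂ) * ∫ p, f p * exp (I * (p + ω) * r) = I * ∫ p, f' p * exp (I * (p + ω) * r) := by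
  set e : ℝ → ℂ := fun p => exp (I * (p + ω) * r)
  have he : ∀ p, HasDerivAt e (e p * (I * r)) p := fun p => by
    simpa only [mul_one] using (((hasDerivAt_id' (p : ℂ)).add_const (ω : ℂ)).const_mul I
      |>.mul_const (r : ℂ) |>.cexp).comp_ofReal
  have he_norm : ∀ p, ‖e p‖ = 1 := fun p => by
    simp only [e, mul_assoc, ← ofReal_add, ← ofReal_mul, norm_exp_I_mul_ofReal]
  have he_meas : AEStronglyMeasurable e := by fun_prop
  have hibp := integral_mul_deriv_eq_deriv_mul_of_integrable (fun x _ => hf x) (fun x _ => he x)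
    (hfi.mul_bdd (he_meas.mul_const _) (ae_of_all _ fun p => (norm_mul_le _ _).trans_eq
      (by rw [he_norm, one_mul])))
    (hf'i.mul_bdd he_meas (ae_of_all _ fun p => (he_norm p).le))
    (hfi.mul_bdd he_meas (ae_of_all _ fun p => (he_norm p).le))
  simp only [← mul_assoc, integral_mul_const] at hibp
  linear_combination (-I) * hibp + (r * ∫ p, f p * e p) * I_sq

theorem abs_mul_integral_mul_cexp {f f' : ℝ → ℂ} (hf : ∀ x, HasDerivAt f (f' x) x)
    (hfi : Integrable f) (hf'i : Integrable f') (ω r : ℝ) :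
    ((|r| : ℝ) : ℂ) * ∫ p, f p * exp (I * (p + ω) * r) =
      ∫ p, f' p * (I * Real.sign r * exp (I * (p + ω) * r)) := by
  rw [← Real.sign_mul_self_eq_abs, ofReal_mul, mul_assoc, ofReal_mul_integral_mul_cexp hf hfi hf'i,
    ← integral_const_mul, ← integral_const_mul]
  exact integral_congr_ae (ae_of_all _ fun p => by ring)

theorem norm_I_mul_sign_mul_cexp_le (q r : ℝ) : ‖I * Real.sign r * exp (I * q * r)‖ ≤ 1 := by
  rw [norm_mul, norm_mul, norm_I, one_mul, norm_real, mul_assoc, ← ofReal_mul,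
    norm_exp_I_mul_ofReal, mul_one]
  rcases Real.sign_apply_eq r with h | h | h <;> simp [h]

-- At `q = 0` both sides vanish, the right one because `x / 0 = 0`.
theorem integral_Ioc_I_mul_sign_mul_cexp (q : ℝ) {T : ℝ} (hT : 0 ≤ T) :
    ∫ r in Ioc (-T) T, I * Real.sign r * exp (I * q * r) = 2 * (cos (q * T) - 1) / q := by
  set f : ℝ → ℂ := fun r => I * Real.sign r * exp (I * q * r)
  have hf : ∀ a b, IntervalIntegrable f volume a b := fun a b =>
    intervalIntegrable_const.mono_fun' (by fun_prop)
      (ae_of_all _ fun r => norm_I_mul_sign_mul_cexp_le q r)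
  have hpos : ∫ r in 0..T, f r = ∫ r in 0..T, I * exp (I * q * r) :=
    intervalIntegral.integral_congr_ae (ae_of_all _ fun r hr => by
      rw [uIoc_of_le hT] at hr; simp [f, Real.sign_of_pos hr.1])
  have hneg : ∫ r in 0..T, f (-r) = ∫ r in 0..T, -I * exp (-(I * q) * r) :=
    intervalIntegral.integral_congr_ae (ae_of_all _ fun r hr => by
      rw [uIoc_of_le hT] at hr
      simp [f, Real.sign_of_neg (neg_lt_zero.2 hr.1)])
  rw [← intervalIntegral.integral_of_le (neg_le_self hT),
    ← intervalIntegral.integral_add_adjacent_intervals (b := 0) (hf _ _) (hf _ _), ← neg_zero,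
    ← intervalIntegral.integral_comp_neg, neg_zero, hpos, hneg, intervalIntegral.integral_const_mul,
    intervalIntegral.integral_const_mul]
  rcases eq_or_ne q 0 with rfl | hq
  · simp
  have hIq : I * q ≠ 0 := mul_ne_zero I_ne_zero (ofReal_ne_zero.2 hq)
  rw [integral_exp_mul_complex hIq, integral_exp_mul_complex (neg_ne_zero.2 hIq), cos]
  simp only [ofReal_zero, mul_zero, exp_zero]
  field_simp
  ring

theorem integral_integral_mul_swap {α β 𝕜 : Type*} [MeasurableSpace α] [MeasurableSpace β]
    [RCLike 𝕜] {μ : Measure α} {ν : Measure β} [IsFiniteMeasure μ] [SFinite ν] {g : β → 𝕜}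
    {κ : α → β → 𝕜} {C : ℝ} (hg : Integrable g ν)
    (hκ : AEStronglyMeasurable (Function.uncurry κ) (μ.prod ν)) (hκC : ∀ a b, ‖κ a b‖ ≤ C) :
    ∫ a, ∫ b, g b * κ a b ∂ν ∂μ = ∫ b, ∫ a, g b * κ a b ∂μ ∂ν :=
  integral_integral_swap ((hg.comp_snd μ).mul_bdd hκ (ae_of_all _ fun z => hκC z.1 z.2))

namespace SchwartzMap

variable (φ : 𝓢(ℝ, ℂ)) (ω : ℝ)

theorem integrable_deriv : Integrable (deriv φ) :=
  funext (derivCLM_apply ℝ φ) ▸ (derivCLM ℝ ℂ φ).integrable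

theorem integrable_regularPart_deriv_sub : Integrable (regularPart fun q => deriv φ (q - ω)) := by
  obtain ⟨K, hK⟩ := φ.exists_lipschitzWith_deriv
  refine LipschitzWith.integrable_regularPart (K := K) (LipschitzWith.of_dist_le_mul fun x y => ?_)
    ((φ.integrable_deriv).comp_sub_right ω)
  simpa only [dist_sub_right] using hK.dist_le_mul (x - ω) (y - ω)

theorem integral_deriv_mul_div_eq {w : ℝ → ℂ} {C C' : ℝ} (hw : Measurable w)
    (hw_even : ∀ q, w (-q) = w q) (hw_bdd : ∀ q, ‖w q‖ ≤ C) (hw_div : ∀ q, ‖w q / q‖ ≤ C') :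
    ∫ p, deriv φ p * (w (p + ω) / ↑(p + ω)) =
      ∫ q, regularPart (fun q => deriv φ (q - ω)) q * w q := by
  rw [← integral_mul_div_eq_integral_regularPart_mul (φ.integrable_regularPart_deriv_sub ω) hw
    hw_even hw_bdd hw_div, ← integral_add_right_eq_self (fun q => deriv φ (q - ω) * (w q / q)) ω]
  simp only [add_sub_cancel_right]

theorem setIntegral_two_mul_deriv_div_eq {δ : ℝ} (hδ : 0 < δ) :
    ∫ p in {p : ℝ | δ < |p + ω|}, (2 : ℂ) * deriv (fun q : ℝ => φ q) p / ((p : ℂ) + ω) =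
      2 * ∫ q in {q : ℝ | δ < |q|}, regularPart (fun q => deriv φ (q - ω)) q := by
  have hS : MeasurableSet {q : ℝ | δ < |q|} := measurableSet_lt measurable_const (by fun_prop)
  set w := {q : ℝ | δ < |q|}.indicator fun _ => (2 : ℂ) with hw_def
  have hw_div : ∀ q, ‖w q / q‖ ≤ 2 / δ := fun q => by
    by_cases hq : δ < |q|
    · rw [hw_def, indicator_of_mem (s := {q : ℝ | δ < |q|}) hq, norm_div, norm_real,
        Complex.norm_two, Real.norm_eq_abs]
      exact div_le_div_of_nonneg_left zero_le_two hδ hq.le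
    · rw [hw_def, indicator_of_notMem (s := {q : ℝ | δ < |q|}) hq, zero_div, norm_zero]
      positivity
  calc ∫ p in {p : ℝ | δ < |p + ω|}, (2 : ℂ) * deriv (fun q : ℝ => φ q) p / ((p : ℂ) + ω)
      = ∫ p, deriv φ p * (w (p + ω) / ↑(p + ω)) := by
        rw [← integral_indicator (measurableSet_lt measurable_const (by fun_prop) :
          MeasurableSet {p : ℝ | δ < |p + ω|})]
        refine integral_congr_ae (ae_of_all _ fun p => ?_)
        simp only [hw_def, indicator_apply, mem_ofPred_eq, ofReal_add]
        split_ifs <;> ring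
    _ = ∫ q, regularPart (fun q => deriv φ (q - ω)) q * w q :=
        φ.integral_deriv_mul_div_eq ω (measurable_const.indicator hS)
          (fun q => by simp only [w, indicator_apply, mem_ofPred_eq, abs_neg])
          (fun q => norm_indicator_le_norm_self _ _) hw_div
    _ = ∫ q in {q : ℝ | δ < |q|}, 2 * regularPart (fun q => deriv φ (q - ω)) q := by
        rw [← integral_indicator hS]
        refine integral_congr_ae (ae_of_all _ fun q => ?_)
        by_cases hq : δ < |q| <;> simp [hw_def, hq, mul_comm]
    _ = _ := integral_const_mul _ _

theorem integral_Ioc_abs_mul_integral_eq {t : ℝ} (ht : 0 ≤ t) :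
    ∫ r in Ioc (-t) t, ((|r| : ℝ) : ℂ) * ∫ p : ℝ, φ p * exp (I * ((p : ℂ) + ω) * r) =
      ∫ q, regularPart (fun q => deriv φ (q - ω)) q * (2 * (cos (q * t) - 1)) := by
  have hcos : ∀ q : ℝ, ‖2 * (cos (q * t) - 1)‖ = 2 * |Real.cos (q * t) - Real.cos 0| := fun q => by
    rw [norm_mul, Complex.norm_two, Real.cos_zero, ← ofReal_mul, ← ofReal_cos, ← ofReal_one,
      ← ofReal_sub, norm_real, Real.norm_eq_abs]
  have hw_div : ∀ q : ℝ, ‖2 * (cos (q * t) - 1) / q‖ ≤ 2 * |t| := fun q => by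
    rw [norm_div, norm_real, hcos]
    refine div_le_of_le_mul₀ (norm_nonneg _) (by positivity) ?_
    calc 2 * |Real.cos (q * t) - Real.cos 0| ≤ 2 * |q * t - 0| :=
          mul_le_mul_of_nonneg_left (Real.abs_cos_sub_cos_le _ _) zero_le_two
      _ = 2 * |t| * ‖q‖ := by rw [sub_zero, abs_mul, Real.norm_eq_abs]; ring
  have hw_bdd : ∀ q : ℝ, ‖2 * (cos (q * t) - 1)‖ ≤ 4 := fun q => by
    rw [hcos, Real.cos_zero]
    linarith [abs_sub (Real.cos (q * t)) 1, abs_one (α := ℝ), Real.abs_cos_le_one (q * t)]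
  have hκ : Measurable fun z : ℝ × ℝ => I * Real.sign z.1 * exp (I * ↑(z.2 + ω) * z.1) := by
    fun_prop
  calc ∫ r in Ioc (-t) t, ((|r| : ℝ) : ℂ) * ∫ p : ℝ, φ p * exp (I * ((p : ℂ) + ω) * r)
      = ∫ r in Ioc (-t) t, ∫ p, deriv φ p * (I * Real.sign r * exp (I * ↑(p + ω) * r)) := by
        refine integral_congr_ae (ae_of_all _ fun r => ?_)
        dsimp only
        rw [abs_mul_integral_mul_cexp (fun x => φ.differentiableAt.hasDerivAt) φ.integrable
          φ.integrable_deriv]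
        simp only [ofReal_add]
    _ = ∫ p, ∫ r in Ioc (-t) t, deriv φ p * (I * Real.sign r * exp (I * ↑(p + ω) * r)) :=
        integral_integral_mul_swap φ.integrable_deriv hκ.aestronglyMeasurable
          fun r p => norm_I_mul_sign_mul_cexp_le _ _
    _ = ∫ p, deriv φ p * (2 * (cos (↑(p + ω) * t) - 1) / ↑(p + ω)) := by
        simp only [integral_const_mul, integral_Ioc_I_mul_sign_mul_cexp _ ht]
    _ = _ := φ.integral_deriv_mul_div_eq ω (by fun_prop)
        (fun q => by push_cast; rw [neg_mul, cos_neg]) hw_bdd hw_div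

theorem tendsto_principalValue :
    Tendsto (fun δ : ℝ => -∫ p in {p : ℝ | δ < |p + ω|},
        (2 : ℂ) * deriv (fun q : ℝ => φ q) p / ((p : ℂ) + ω))
      (𝓝[>] 0) (𝓝 (-(2 * ∫ q, regularPart (fun q => deriv φ (q - ω)) q))) :=
  ((tendsto_setIntegral_abs_gt (φ.integrable_regularPart_deriv_sub ω)).const_mul 2).neg.congr'
    (eventually_mem_nhdsWithin.mono fun _ hδ => by
      simp only [φ.setIntegral_two_mul_deriv_div_eq ω hδ])

theorem tendsto_integral_Ioc_abs_mul_integral :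
    Tendsto (fun t : ℝ => ∫ r in Ioc (-t) t,
        ((|r| : ℝ) : ℂ) * ∫ p : ℝ, φ p * exp (I * ((p : ℂ) + ω) * r))
      atTop (𝓝 (-(2 * ∫ q, regularPart (fun q => deriv φ (q - ω)) q))) :=
  (tendsto_integral_mul_two_mul_cos_sub_one (φ.integrable_regularPart_deriv_sub ω)).congr'
    (eventually_ge_atTop 0 |>.mono fun _ ht => (φ.integral_Ioc_abs_mul_integral_eq ω ht).symm)

end SchwartzMap

theorem stmt_9_general (ω : ℝ) (φ : SchwartzMap ℝ ℂ) :
    ∃ L : ℂ,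
      Tendsto
        (fun δ : ℝ =>
          -∫ p in {p : ℝ | δ < |p + ω|},
            (2 : ℂ) * deriv (fun q : ℝ => φ q) p / ((p : ℂ) + ω))
        (nhdsWithin 0 (Set.Ioi 0)) (nhds L) ∧
      Tendsto
        (fun t : ℝ =>
          ∫ r in Set.Ioc (-t) t,
            ((|r| : ℝ) : ℂ) * ∫ p : ℝ, φ p * Complex.exp (Complex.I * ((p : ℂ) + ω) * r))
        atTop (nhds L) :=
  ⟨_, φ.tendsto_principalValue ω, φ.tendsto_integral_Ioc_abs_mul_integral ω⟩

theorem stmt_9 (ω : ℝ) (hω : 0 < ω) (φ : SchwartzMap ℝ ℂ) :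
    ∃ L : ℂ,
      Tendsto
        (fun δ : ℝ =>
          -∫ p in {p : ℝ | δ < |p + ω|},
            (2 : ℂ) * deriv (fun q : ℝ => φ q) p / ((p : ℂ) + ω))
        (nhdsWithin 0 (Set.Ioi 0)) (nhds L) ∧
      Tendsto
        (fun t : ℝ =>
          ∫ r in Set.Ioc (-t) t,
            ((|r| : ℝ) : ℂ) * ∫ p : ℝ, φ p * Complex.exp (Complex.I * ((p : ℂ) + ω) * r))
        atTop (nhds L) :=
  stmt_9_general ω φ
end

section
/- Let g : ℝ → ℂ be given by g(t) = ∫_{ℝ³} a(p) e^{i ω(p) t} d³p + ∫_{ℝ³} b(p) e^{−i ω(p) t} d³p where ω(p) = √(|p|² + m²), m > 0, and a, b are Schwartz functions on ℝ³. Then g is bounded on ℝ and |g(t)| → 0 as |t| → ∞. -/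
/-!
Polar coordinates and the substitution `s = √(r² + m²)` turn `∫ a(p) e^{i ω(p) t} dp` into a
one-dimensional Fourier integral `∫ F(s) e^{i s t} ds`, where `F` is the density of the image of
`a(p) dp` under `ω`. Boundedness is then the `L¹` bound for Fourier transforms, and the decay is
the Riemann–Lebesgue lemma.
-/

open MeasureTheory Filter Set Metric Module Complex
open scoped FourierTransform Real Topology

namespace MeasureTheory.Measure

variable {G : Type*} [NormedAddCommGroup G] [NormedSpace ℝ G]

theorem integral_volumeIoiPow (n : ℕ) (φ : ℝ → G) :
    ∫ r, φ r ∂volumeIoiPow n = ∫ r in Ioi (0 : ℝ), r ^ n • φ r := by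
  simp only [volumeIoiPow, ENNReal.ofReal]
  rw [integral_withDensity_eq_integral_smul ((measurable_subtype_coe.pow_const _).real_toNNReal),
    integral_subtype_comap measurableSet_Ioi fun r ↦ Real.toNNReal (r ^ n) • φ r]
  refine setIntegral_congr_fun measurableSet_Ioi fun r hr ↦ ?_
  rw [NNReal.smul_def, Real.coe_toNNReal _ (pow_nonneg hr.out.le _)]

end MeasureTheory.Measure

theorem homeomorphUnitSphereProd_snd_smul_fst {E : Type*} [NormedAddCommGroup E] [NormedSpace ℝ E]
    (x : ({0}ᶜ : Set E)) :
    ((homeomorphUnitSphereProd E x).2 : ℝ) • ((homeomorphUnitSphereProd E x).1 : E) = x := by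
  rw [← homeomorphUnitSphereProd_symm_apply_coe, Homeomorph.symm_apply_apply]

namespace MeasureTheory

variable {E G : Type*} [NormedAddCommGroup E] [NormedSpace ℝ E]
  [FiniteDimensional ℝ E] [MeasurableSpace E] [BorelSpace E] (μ : Measure E) [μ.IsAddHaarMeasure]
  [NormedAddCommGroup G] {f : E → G}

theorem integral_eq_integral_toSphere_prod [Nontrivial E] [NormedSpace ℝ G] (f : E → G) :
    ∫ x, f x ∂μ =
      ∫ y, f (y.2.1 • y.1.1) ∂μ.toSphere.prod (Measure.volumeIoiPow (finrank ℝ E - 1)) := by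
  rw [← μ.measurePreserving_homeomorphUnitSphereProd.integral_comp
    (Homeomorph.measurableEmbedding _) fun y ↦ f (y.2.1 • y.1.1)]
  simp only [homeomorphUnitSphereProd_snd_smul_fst]
  rw [integral_subtype_comap (measurableSet_singleton _).compl, restrict_compl_singleton]

theorem Integrable.comp_smul_toSphere_prod (hf : Integrable f μ) :
    Integrable (fun y : sphere (0 : E) 1 × Ioi (0 : ℝ) ↦ f (y.2.1 • y.1.1))
      (μ.toSphere.prod (Measure.volumeIoiPow (finrank ℝ E - 1))) := by
  rw [← μ.measurePreserving_homeomorphUnitSphereProd.integrable_comp_emb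
    (Homeomorph.measurableEmbedding _)]
  simp only [Function.comp_def, homeomorphUnitSphereProd_snd_smul_fst]
  exact (integrableOn_iff_comap_subtypeVal (measurableSet_singleton _).compl).1 hf.integrableOn

theorem integral_eq_integral_pow_smul_integral_sphere [Nontrivial E] [NormedSpace ℝ G]
    (hf : Integrable f μ) :
    ∫ x, f x ∂μ = ∫ r in Ioi (0 : ℝ), r ^ (finrank ℝ E - 1) • ∫ θ, f (r • θ.1) ∂μ.toSphere := by
  rw [integral_eq_integral_toSphere_prod, integral_prod_symm _ (hf.comp_smul_toSphere_prod μ)]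
  exact Measure.integral_volumeIoiPow _ fun r ↦ ∫ θ, f (r • θ.1) ∂μ.toSphere

end MeasureTheory

section Substitution

variable {G : Type*} [NormedAddCommGroup G] [NormedSpace ℝ G] {m : ℝ}

theorem image_sqrt_sq_sub_sq_Ioi (hm : 0 ≤ m) :
    (fun s ↦ √(s ^ 2 - m ^ 2)) '' Ioi m = Ioi 0 := by
  ext r
  simp only [mem_image, mem_Ioi]
  constructor
  · rintro ⟨s, hs, rfl⟩
    exact Real.sqrt_pos.2 (by nlinarith)
  · intro hr
    refine ⟨√(r ^ 2 + m ^ 2), ?_, ?_⟩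
    · exact (Real.lt_sqrt hm).2 (lt_add_of_pos_left _ (pow_pos hr 2))
    · rw [Real.sq_sqrt (by positivity), add_sub_cancel_right, Real.sqrt_sq hr.le]

theorem sqrt_sq_sub_sq_add_sq {s : ℝ} (hm : 0 ≤ m) (hs : m ≤ s) :
    √(√(s ^ 2 - m ^ 2) ^ 2 + m ^ 2) = s := by
  rw [Real.sq_sqrt (by nlinarith), sub_add_cancel, Real.sqrt_sq (hm.trans hs)]

theorem hasDerivAt_sqrt_sq_sub_sq {s : ℝ} (hs : m ^ 2 < s ^ 2) :
    HasDerivAt (fun s ↦ √(s ^ 2 - m ^ 2)) (s / √(s ^ 2 - m ^ 2)) s := by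
  have hpos : 0 < √(s ^ 2 - m ^ 2) := Real.sqrt_pos.2 (sub_pos.2 hs)
  convert ((hasDerivAt_pow 2 s).sub_const (m ^ 2)).sqrt (sub_pos.2 hs).ne' using 1
  field_simp
  ring

theorem strictMonoOn_sqrt_sq_sub_sq (hm : 0 ≤ m) :
    StrictMonoOn (fun s ↦ √(s ^ 2 - m ^ 2)) (Ioi m) := fun s hs t ht hst ↦
  Real.sqrt_lt_sqrt (by nlinarith [hs.out]) (by nlinarith [hs.out])

theorem abs_div_sqrt_sq_sub_sq {s : ℝ} (hm : 0 ≤ m) (hs : m < s) :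
    |s / √(s ^ 2 - m ^ 2)| = s / √(s ^ 2 - m ^ 2) :=
  abs_of_nonneg (div_nonneg (hm.trans hs.le) (Real.sqrt_nonneg _))

theorem integral_Ioi_eq_integral_Ioi_sqrt_sq_sub_sq (hm : 0 ≤ m) (φ : ℝ → G) :
    ∫ r in Ioi 0, φ r = ∫ s in Ioi m, (s / √(s ^ 2 - m ^ 2)) • φ √(s ^ 2 - m ^ 2) := by
  rw [← image_sqrt_sq_sub_sq_Ioi hm, integral_image_eq_integral_abs_deriv_smul measurableSet_Ioi
    (fun s hs ↦ (hasDerivAt_sqrt_sq_sub_sq (by nlinarith [hs.out])).hasDerivWithinAt)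
    (strictMonoOn_sqrt_sq_sub_sq hm).injOn]
  exact setIntegral_congr_fun measurableSet_Ioi fun s hs ↦ by
    rw [abs_div_sqrt_sq_sub_sq hm hs]

end Substitution

section EnergyDensity

variable {E : Type*} [NormedAddCommGroup E] [NormedSpace ℝ E] [FiniteDimensional ℝ E]
  [MeasurableSpace E] [BorelSpace E] (μ : Measure E) [μ.IsAddHaarMeasure] {m : ℝ} {f : E → ℂ}

/-- The density of the image of `f • μ` under `x ↦ √(‖x‖² + m²)`, obtained from polar coordinates
followed by the substitution `r = √(s² - m²)`. -/
noncomputable def energyDensity (μ : Measure E) (m : ℝ) (f : E → ℂ) : ℝ → ℂ :=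
  (Ioi m).indicator fun s ↦ (s / √(s ^ 2 - m ^ 2)) • √(s ^ 2 - m ^ 2) ^ (finrank ℝ E - 1) •
    ∫ θ, f (√(s ^ 2 - m ^ 2) • θ.1) ∂μ.toSphere

theorem integral_mul_comp_sqrt_norm_sq_add_sq [Nontrivial E] (hm : 0 ≤ m) {h : ℝ → ℂ}
    (hfh : Integrable (fun x ↦ f x * h √(‖x‖ ^ 2 + m ^ 2)) μ) :
    ∫ x, f x * h √(‖x‖ ^ 2 + m ^ 2) ∂μ = ∫ s, energyDensity μ m f s * h s := by
  have hsphere (r : ℝ) : ∫ θ : sphere (0 : E) 1, f (r • θ.1) * h √(‖r • θ.1‖ ^ 2 + m ^ 2)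
      ∂μ.toSphere = (∫ θ, f (r • θ.1) ∂μ.toSphere) * h √(r ^ 2 + m ^ 2) := by
    simp_rw [norm_smul, norm_eq_of_mem_sphere, mul_one, Real.norm_eq_abs, sq_abs]
    exact integral_mul_const _ _
  rw [integral_eq_integral_pow_smul_integral_sphere μ hfh]
  simp_rw [hsphere]
  rw [integral_Ioi_eq_integral_Ioi_sqrt_sq_sub_sq hm, energyDensity]
  simp_rw [← indicator_mul_left]
  rw [integral_indicator measurableSet_Ioi]
  refine setIntegral_congr_fun measurableSet_Ioi fun s hs ↦ ?_
  simp only [sqrt_sq_sub_sq_add_sq hm hs.out.le, smul_mul_assoc]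

theorem integral_mul_exp_sqrt_norm_sq_add_sq [Nontrivial E] (hm : 0 ≤ m) (hf : Integrable f μ)
    (t : ℝ) :
    ∫ x, f x * exp (I * √(‖x‖ ^ 2 + m ^ 2) * t) ∂μ =
      ∫ s, energyDensity μ m f s * exp (I * s * t) := by
  refine integral_mul_comp_sqrt_norm_sq_add_sq μ hm (h := fun s : ℝ ↦ exp (I * s * t)) ?_
  refine hf.mul_bdd (c := 1) (by fun_prop) (.of_forall fun x ↦ le_of_eq ?_)
  rw [mul_assoc, ← ofReal_mul, norm_exp_I_mul_ofReal]

end EnergyDensity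

theorem integral_mul_exp_eq_fourier (F : ℝ → ℂ) (t : ℝ) :
    ∫ s, F s * exp (I * s * t) = 𝓕 F (-(2 * π)⁻¹ * t) := by
  rw [Real.fourier_real_eq_integral_exp_smul]
  congr 1 with s
  rw [smul_eq_mul, mul_comm]
  congr 2
  push_cast
  field_simp

theorem norm_integral_mul_exp_le (F : ℝ → ℂ) (t : ℝ) :
    ‖∫ s, F s * exp (I * s * t)‖ ≤ ∫ s, ‖F s‖ := by
  rw [integral_mul_exp_eq_fourier]
  exact VectorFourier.norm_fourierIntegral_le_integral_norm _ _ _ _ _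

theorem tendsto_integral_mul_exp_cocompact (F : ℝ → ℂ) :
    Tendsto (fun t : ℝ ↦ ∫ s, F s * exp (I * s * t)) (cocompact ℝ) (𝓝 0) := by
  simp_rw [integral_mul_exp_eq_fourier]
  exact (Real.zero_at_infty_fourier F).comp
    (tendsto_cocompact_mul_left₀ (by simp [Real.pi_ne_zero]))

theorem stmt_10 (m : ℝ) (hm : 0 < m)
    (a b : SchwartzMap (EuclideanSpace ℝ (Fin 3)) ℂ) :
    let g : ℝ → ℂ := fun t =>
      (∫ p : EuclideanSpace ℝ (Fin 3),
          a p * Complex.exp (Complex.I * (Real.sqrt (‖p‖ ^ 2 + m ^ 2) : ℝ) * t)) +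
      ∫ p : EuclideanSpace ℝ (Fin 3),
          b p * Complex.exp (-(Complex.I * (Real.sqrt (‖p‖ ^ 2 + m ^ 2) : ℝ) * t))
    (∃ M : ℝ, ∀ t : ℝ, ‖g t‖ ≤ M) ∧ Tendsto g (cocompact ℝ) (nhds 0) := by
  intro g
  set Fa := energyDensity volume m a
  set Fb := energyDensity volume m b
  have hg (t : ℝ) : g t = (∫ s, Fa s * exp (I * s * t)) + ∫ s, Fb s * exp (I * s * ↑(-t)) := by
    rw [← integral_mul_exp_sqrt_norm_sq_add_sq volume hm.le a.integrable,
      ← integral_mul_exp_sqrt_norm_sq_add_sq volume hm.le b.integrable]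
    simp only [g, ofReal_neg, mul_neg]
  refine ⟨⟨(∫ s, ‖Fa s‖) + ∫ s, ‖Fb s‖, fun t ↦ ?_⟩, ?_⟩
  · rw [hg]
    exact (norm_add_le _ _).trans
      (add_le_add (norm_integral_mul_exp_le Fa t) (norm_integral_mul_exp_le Fb (-t)))
  · have h := (tendsto_integral_mul_exp_cocompact Fa).add
      ((tendsto_integral_mul_exp_cocompact Fb).comp (Homeomorph.neg ℝ).map_cocompact.le)
    rw [add_zero] at h
    exact h.congr fun t ↦ (hg t).symm
end
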